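/- arXiv:1302.5549 — 3 statements merged into one kernel-verified Lean document; each statement's English description precedes it below -/
import Mathlib

section
/- Let G1 = (V1, E1) and G2 = (V2, E2) be well-formed graphs over the same node type such that the sets V2 \ V1, V1 \ V2, E2 \ E1 and E1 \ E2 are finite. Then Δ(G1, G2) is minimal: for every operation o ∈ Δ(G1, G2), applying the set Δ(G1, G2) \ {o} to G1 (in the order: all remEdge operations, then all remNode operations, then all addNode operations, then all addEdge operations) does not yield G2. -/
/-- A graph over a node type `α`: a set of nodes and a set of edges
(unordered pairs of nodes). -/
structure OpGraph (α : Type*) where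
  V : Set α
  E : Set (Sym2 α)

/-- A graph is well-formed if its edges are pairs of *distinct* nodes and
both endpoints of every edge belong to the node set. -/
def OpGraph.WellFormed {α : Type*} (G : OpGraph α) : Prop :=
  (∀ e ∈ G.E, ¬ e.IsDiag) ∧ ∀ e ∈ G.E, ∀ v ∈ e, v ∈ G.V

/-- Update operations on graphs. -/
inductive Op (α : Type*) where
  | addNode (v : α)
  | remNode (v : α)
  | addEdge (e : Sym2 α)
  | remEdge (e : Sym2 α)

/-- The delta Δ(G1, G2). -/
def delta {α : Type*} (G1 G2 : OpGraph α) : Set (Op α) :=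
  (Op.addNode '' (G2.V \ G1.V)) ∪ (Op.remNode '' (G1.V \ G2.V)) ∪
  (Op.addEdge '' (G2.E \ G1.E)) ∪
  (Op.remEdge '' {e | e ∈ G1.E \ G2.E ∧ ∀ v ∈ e, v ∈ G2.V})

/-- The result of applying a set `S` of operations to a graph `G` in the order:
first all `remEdge` operations, then all `remNode` operations
(each of which removes the node and its incident edges),
then all `addNode` operations, then all `addEdge` operations. -/
def applyDelta {α : Type*} (S : Set (Op α)) (G : OpGraph α) : OpGraph α :=
  ⟨(G.V \ {v | Op.remNode v ∈ S}) ∪ {v | Op.addNode v ∈ S},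
   {e ∈ G.E | Op.remEdge e ∉ S ∧ ∀ v ∈ e, Op.remNode v ∉ S} ∪ {e | Op.addEdge e ∈ S}⟩

/-!
Each operation of Δ(G1, G2) is the only member of the set that brings its node or edge from its
status in G1 to its status in G2, so without it that node or edge keeps its G1 status. The one
point needing care is `remEdge e`: the edge could also disappear as a side effect of a `remNode`,
but Δ only contains `remEdge e` when both endpoints of `e` lie in V2, and Δ removes no node of V2.
-/

section
variable {α : Type*} {S : Set (Op α)} {G G' : OpGraph α}

theorem mem_applyDelta_V {v : α} :
    v ∈ (applyDelta S G).V ↔ v ∈ G.V ∧ Op.remNode v ∉ S ∨ Op.addNode v ∈ S :=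
  Iff.rfl

theorem mem_applyDelta_E {e : Sym2 α} :
    e ∈ (applyDelta S G).E ↔
      e ∈ G.E ∧ Op.remEdge e ∉ S ∧ (∀ v ∈ e, Op.remNode v ∉ S) ∨ Op.addEdge e ∈ S :=
  Iff.rfl

theorem applyDelta_ne_of_addNode_notMem {v : α} (hv : v ∈ G'.V \ G.V)
    (hS : Op.addNode v ∉ S) : applyDelta S G ≠ G' := by
  rintro rfl
  rcases mem_applyDelta_V.1 hv.1 with h | h
  exacts [hv.2 h.1, hS h]

theorem applyDelta_ne_of_remNode_notMem {v : α} (hv : v ∈ G.V \ G'.V)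
    (hS : Op.remNode v ∉ S) : applyDelta S G ≠ G' := by
  rintro rfl
  exact hv.2 (mem_applyDelta_V.2 (Or.inl ⟨hv.1, hS⟩))

theorem applyDelta_ne_of_addEdge_notMem {e : Sym2 α} (he : e ∈ G'.E \ G.E)
    (hS : Op.addEdge e ∉ S) : applyDelta S G ≠ G' := by
  rintro rfl
  rcases mem_applyDelta_E.1 he.1 with h | h
  exacts [he.2 h.1, hS h]

theorem applyDelta_ne_of_remEdge_notMem {e : Sym2 α} (he : e ∈ G.E \ G'.E)
    (hS : Op.remEdge e ∉ S) (hends : ∀ v ∈ e, Op.remNode v ∉ S) : applyDelta S G ≠ G' := by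
  rintro rfl
  exact he.2 (mem_applyDelta_E.2 (Or.inl ⟨he.1, hS, hends⟩))

theorem remNode_mem_delta_iff {v : α} : Op.remNode v ∈ delta G G' ↔ v ∈ G.V \ G'.V := by
  simp [delta]

end

theorem delta_minimal_general {α : Type*} (G1 G2 : OpGraph α) :
    ∀ o ∈ delta G1 G2, applyDelta (delta G1 G2 \ {o}) G1 ≠ G2 := by
  intro o ho
  have hnot : o ∉ delta G1 G2 \ {o} := Set.notMem_sdiff_of_mem (Set.mem_singleton o)
  rcases ho with ((⟨v, hv, rfl⟩ | ⟨v, hv, rfl⟩) | ⟨e, he, rfl⟩) | ⟨e, ⟨he, hends⟩, rfl⟩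
  · exact applyDelta_ne_of_addNode_notMem hv hnot
  · exact applyDelta_ne_of_remNode_notMem hv hnot
  · exact applyDelta_ne_of_addEdge_notMem he hnot
  · refine applyDelta_ne_of_remEdge_notMem he hnot fun v hv hrem => ?_
    exact (remNode_mem_delta_iff.1 hrem.1).2 (hends v hv)

/-- Δ(G1, G2) is minimal: removing any single operation `o` from it gives a set
whose application to G1 (in the order remEdge / remNode / addNode / addEdge)
does not yield G2. -/
theorem delta_minimal {α : Type*} (G1 G2 : OpGraph α)
    (h1 : G1.WellFormed) (h2 : G2.WellFormed)
    (hfV₁ : (G2.V \ G1.V).Finite) (hfV₂ : (G1.V \ G2.V).Finite)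
    (hfE₁ : (G2.E \ G1.E).Finite) (hfE₂ : (G1.E \ G2.E).Finite) :
    ∀ o ∈ delta G1 G2, applyDelta (delta G1 G2 \ {o}) G1 ≠ G2 :=
  delta_minimal_general G1 G2
end

section
/- Let a timestamped log over [t0, t_cur] starting from a well-formed graph SG_{t0} with a finite edge set be given, and for t ∈ [t0, t_cur] let deg_t(v) denote the number of edges of SG_t incident to node v. Then for every node v and all t_k ≤ t_l in [t0, t_cur], the degree differential satisfies (as integers): deg_{t_l}(v) − deg_{t_k}(v) = (number of logged addEdge operations incident to v with timestamp in (t_k, t_l]) − (number of logged remEdge operations incident to v with timestamp in (t_k, t_l]). In particular, a differential range degree query can be answered from the delta alone, without reconstructing any snapshot. -/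
/-- A graph over a node type `α`: a set of nodes and a set of edges
(unordered pairs of nodes). -/
structure LogGraph (α : Type*) where
  V : Set α
  E : Set (Sym2 α)

/-- A graph is well-formed if its edges are pairs of *distinct* nodes and
both endpoints of every edge belong to the node set. -/
def LogGraph.WellFormed {α : Type*} (G : LogGraph α) : Prop :=
  (∀ e ∈ G.E, ¬ e.IsDiag) ∧ ∀ e ∈ G.E, ∀ v ∈ e, v ∈ G.V

/-- The action of a single operation on a graph: `addNode v` adds the node `v`;
`remNode v` removes `v` and all edges incident to it; `addEdge e` adds the edge `e`;
`remEdge e` removes the edge `e`. -/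
def applyOp {α : Type*} (G : LogGraph α) : Op α → LogGraph α
  | Op.addNode v => ⟨G.V ∪ {v}, G.E⟩
  | Op.remNode v => ⟨G.V \ {v}, {e ∈ G.E | v ∉ e}⟩
  | Op.addEdge e => ⟨G.V, G.E ∪ {e}⟩
  | Op.remEdge e => ⟨G.V, G.E \ {e}⟩

/-- Applying a sequence of operations to a graph, from left to right. -/
def applySeq {α : Type*} (G : LogGraph α) (l : List (Op α)) : LogGraph α :=
  l.foldl applyOp G

/-- Validity of an operation at a graph. -/
def validAt {α : Type*} (G : LogGraph α) : Op α → Prop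
  | Op.addNode v => v ∉ G.V
  | Op.remNode v => v ∈ G.V ∧ ∀ e ∈ G.E, v ∉ e
  | Op.addEdge e => ¬ e.IsDiag ∧ (∀ v ∈ e, v ∈ G.V) ∧ e ∉ G.E
  | Op.remEdge e => e ∈ G.E

/-- The inverse of an operation. -/
def Op.inv {α : Type*} : Op α → Op α
  | Op.addNode v => Op.remNode v
  | Op.remNode v => Op.addNode v
  | Op.addEdge e => Op.remEdge e
  | Op.remEdge e => Op.addEdge e

/-- Validity of a sequence of operations at a graph: each operation is valid at the
graph obtained by applying the preceding operations. -/
def validSeq {α : Type*} : LogGraph α → List (Op α) → Prop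
  | _, [] => True
  | G, op :: rest => validAt G op ∧ validSeq (applyOp G op) rest
/-- The snapshot at time `t` determined by an initial graph `SG0` and a timestamped
log `L`: the result of applying to `SG0` the logged operations with timestamp `≤ t`. -/
def snapshot {α τ : Type*} [LinearOrder τ] (SG0 : LogGraph α) (L : List (Op α × τ))
    (t : τ) : LogGraph α :=
  applySeq SG0 ((L.filter fun p => decide (p.2 ≤ t)).map Prod.fst)

/-- The degree of a node `v` in a graph `G`: the number of edges of `G` incident to `v`. -/
noncomputable def LogGraph.deg {α : Type*} (G : LogGraph α) (v : α) : ℕ :=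
  {e ∈ G.E | v ∈ e}.ncard

/-- `op` is an `addEdge` operation incident to the node `v`. -/
def isAddEdgeInc {α : Type*} [DecidableEq α] (v : α) : Op α → Bool
  | Op.addEdge e => decide (v ∈ e)
  | _ => false

/-- `op` is a `remEdge` operation incident to the node `v`. -/
def isRemEdgeInc {α : Type*} [DecidableEq α] (v : α) : Op α → Bool
  | Op.remEdge e => decide (v ∈ e)
  | _ => false

/-!
Because the log is sorted by timestamp, the operations stamped `≤ t_l` are those stamped `≤ t_k`
followed by those stamped in `(t_k, t_l]`; hence `SG_{t_l}` arises from `SG_{t_k}` by applying the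
latter, and they form a valid sequence there. A valid operation changes the degree of `v` by `+1`
if it is an `addEdge` incident to `v` (the edge was absent), by `-1` if it is an incident
`remEdge` (the edge was present), and by `0` otherwise, since `remNode` is only valid at
isolated nodes.
-/

section

variable {α : Type*}

theorem applySeq_append (G : LogGraph α) (l₁ l₂ : List (Op α)) :
    applySeq G (l₁ ++ l₂) = applySeq (applySeq G l₁) l₂ :=
  List.foldl_append

theorem validSeq_append {G : LogGraph α} {l₁ l₂ : List (Op α)} :
    validSeq G (l₁ ++ l₂) ↔ validSeq G l₁ ∧ validSeq (applySeq G l₁) l₂ := by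
  induction l₁ generalizing G with
  | nil => simp [validSeq, applySeq]
  | cons op l ih => simp [validSeq, applySeq, ih, and_assoc]

namespace LogGraph

variable {G : LogGraph α}

theorem finite_E_applyOp (hfin : G.E.Finite) (op : Op α) : (applyOp G op).E.Finite := by
  cases op with
  | addNode v => exact hfin
  | remNode v => exact hfin.sep _
  | addEdge e => exact hfin.union (Set.finite_singleton e)
  | remEdge e => exact hfin.sdiff

theorem finite_E_applySeq (hfin : G.E.Finite) (l : List (Op α)) : (applySeq G l).E.Finite := by
  induction l generalizing G with
  | nil => exact hfin
  | cons op l ih => exact ih (finite_E_applyOp hfin op)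

theorem deg_addEdge [DecidableEq α] (hfin : G.E.Finite) {e : Sym2 α} (he : e ∉ G.E) (v : α) :
    (applyOp G (.addEdge e)).deg v = G.deg v + if v ∈ e then 1 else 0 := by
  simp only [deg, applyOp]
  split_ifs with hv
  · have hinc : {x ∈ G.E ∪ {e} | v ∈ x} = insert e {x ∈ G.E | v ∈ x} := by
      ext x
      simp only [Set.mem_union, Set.mem_singleton_iff, Set.mem_insert_iff, Set.mem_ofPred_eq]
      aesop
    rw [hinc, Set.ncard_insert_of_notMem (fun h => he h.1) (hfin.sep _)]
  · congr 1
    ext x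
    simp only [Set.mem_union, Set.mem_singleton_iff, Set.mem_ofPred_eq]
    aesop

theorem deg_remEdge [DecidableEq α] (hfin : G.E.Finite) {e : Sym2 α} (he : e ∈ G.E) (v : α) :
    (applyOp G (.remEdge e)).deg v + (if v ∈ e then 1 else 0) = G.deg v := by
  simp only [deg, applyOp]
  split_ifs with hv
  · have hinc : {x ∈ G.E \ {e} | v ∈ x} = {x ∈ G.E | v ∈ x} \ {e} := by
      ext x
      simp only [Set.mem_sdiff, Set.mem_singleton_iff, Set.mem_ofPred_eq]
      tauto
    have hmem : e ∈ {x ∈ G.E | v ∈ x} := ⟨he, hv⟩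
    rw [hinc, Set.ncard_sdiff_singleton_add_one hmem (hfin.sep _)]
  · rw [add_zero]
    congr 1
    ext x
    simp only [Set.mem_sdiff, Set.mem_singleton_iff, Set.mem_ofPred_eq]
    aesop

theorem E_applyOp_remNode {w : α} (hw : ∀ e ∈ G.E, w ∉ e) :
    (applyOp G (.remNode w)).E = G.E :=
  Set.sep_eq_self_iff_mem_true.mpr hw

theorem deg_applyOp [DecidableEq α] (hfin : G.E.Finite) {op : Op α} (hop : validAt G op)
    (v : α) :
    ((applyOp G op).deg v : ℤ) =
      G.deg v + (if isAddEdgeInc v op then 1 else 0) - (if isRemEdgeInc v op then 1 else 0) := by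
  cases op with
  | addNode w => simp [applyOp, deg, isAddEdgeInc, isRemEdgeInc]
  | remNode w => simp [deg, E_applyOp_remNode hop.2, isAddEdgeInc, isRemEdgeInc]
  | addEdge e =>
    rw [deg_addEdge hfin hop.2.2 v]
    by_cases hv : v ∈ e <;> simp [isAddEdgeInc, isRemEdgeInc, hv]
  | remEdge e =>
    rw [← deg_remEdge hfin hop v]
    by_cases hv : v ∈ e <;> simp [isAddEdgeInc, isRemEdgeInc, hv]

theorem deg_applySeq [DecidableEq α] (hfin : G.E.Finite) {l : List (Op α)} (hl : validSeq G l)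
    (v : α) :
    ((applySeq G l).deg v : ℤ) =
      G.deg v + l.countP (isAddEdgeInc v) - l.countP (isRemEdgeInc v) := by
  induction l generalizing G with
  | nil => simp [applySeq]
  | cons op l ih =>
    have hstep := ih (finite_E_applyOp hfin op) hl.2
    simp only [applySeq, List.foldl_cons] at hstep ⊢
    rw [hstep, deg_applyOp hfin hl.1, List.countP_cons, List.countP_cons]
    push_cast
    ring

end LogGraph

end

theorem List.filter_le_append_filter_lt {β τ : Type*} [LinearOrder τ] (f : β → τ)
    {l : List β} (hl : l.Pairwise fun a b => f a ≤ f b) (t : τ) :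
    l.filter (fun x => f x ≤ t) ++ l.filter (fun x => t < f x) = l := by
  induction l with
  | nil => rfl
  | cons a l ih =>
    rw [List.pairwise_cons] at hl
    by_cases ha : f a ≤ t
    · simp [ha, ih hl.2]
    · have hlate : ∀ b ∈ l, t < f b := fun b hb => (not_le.mp ha).trans_le (hl.1 b hb)
      have hearly : l.filter (fun x => f x ≤ t) = [] :=
        List.filter_eq_nil_iff.mpr fun b hb => by simpa using hlate b hb
      simpa [ha, hearly] using ⟨not_le.mp ha, hlate⟩

theorem List.filter_le_eq_append {β τ : Type*} [LinearOrder τ] (f : β → τ) {l : List β}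
    (hl : l.Pairwise fun a b => f a ≤ f b) {s t : τ} (hst : s ≤ t) :
    l.filter (fun x => f x ≤ t) =
      l.filter (fun x => f x ≤ s) ++ l.filter (fun x => s < f x ∧ f x ≤ t) := by
  conv_lhs => rw [← List.filter_le_append_filter_lt f (hl.filter _) s]
  simp only [List.filter_filter]
  congr 1
  · exact List.filter_congr fun x _ => by simpa using fun h => h.trans hst
  · exact List.filter_congr fun x _ => by simp

section

variable {α τ : Type*} [LinearOrder τ] {L : List (Op α × τ)}

theorem snapshot_eq_applySeq_snapshot (SG0 : LogGraph α)
    (hmono : L.Pairwise fun p q => p.2 ≤ q.2) {tk tl : τ} (hkl : tk ≤ tl) :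
    snapshot SG0 L tl = applySeq (snapshot SG0 L tk)
      ((L.filter fun p => decide (tk < p.2 ∧ p.2 ≤ tl)).map Prod.fst) := by
  rw [snapshot, snapshot, List.filter_le_eq_append Prod.snd hmono hkl, List.map_append,
    applySeq_append]

theorem validSeq_snapshot_delta {SG0 : LogGraph α} (hmono : L.Pairwise fun p q => p.2 ≤ q.2)
    (hval : validSeq SG0 (L.map Prod.fst)) {tk tl : τ} (hkl : tk ≤ tl) :
    validSeq (snapshot SG0 L tk)
      ((L.filter fun p => decide (tk < p.2 ∧ p.2 ≤ tl)).map Prod.fst) := by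
  rw [← List.filter_le_append_filter_lt Prod.snd hmono tl, List.map_append] at hval
  have hprefix := (validSeq_append.mp hval).1
  rw [List.filter_le_eq_append Prod.snd hmono hkl, List.map_append] at hprefix
  exact (validSeq_append.mp hprefix).2

end

theorem degree_differential_general {α τ : Type*} [DecidableEq α] [LinearOrder τ]
    (SG0 : LogGraph α) (L : List (Op α × τ))
    (hfin : SG0.E.Finite)
    (hmono : L.Pairwise fun p q => p.2 ≤ q.2)
    (hval : validSeq SG0 (L.map Prod.fst))
    (v : α) (tk tl : τ) (hkl : tk ≤ tl) :
    ((snapshot SG0 L tl).deg v : ℤ) - ((snapshot SG0 L tk).deg v : ℤ) =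
      (L.countP fun p => decide (tk < p.2 ∧ p.2 ≤ tl) && isAddEdgeInc v p.1 : ℤ) -
      (L.countP fun p => decide (tk < p.2 ∧ p.2 ≤ tl) && isRemEdgeInc v p.1 : ℤ) := by
  have hfin_k : (snapshot SG0 L tk).E.Finite := LogGraph.finite_E_applySeq hfin _
  rw [snapshot_eq_applySeq_snapshot SG0 hmono hkl, LogGraph.deg_applySeq hfin_k
      (validSeq_snapshot_delta hmono hval hkl) v]
  simp only [List.countP_map, List.countP_filter, Function.comp_def, Bool.and_comm]
  ring

/-- A differential range degree query can be answered from the delta alone: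
the change of the degree of `v` between times `t_k ≤ t_l` equals the number of logged
`addEdge` operations incident to `v` with timestamp in `(t_k, t_l]` minus the number of
logged `remEdge` operations incident to `v` with timestamp in `(t_k, t_l]`. -/
theorem degree_differential {α τ : Type*} [DecidableEq α] [LinearOrder τ]
    (t0 tcur : τ) (SG0 : LogGraph α) (L : List (Op α × τ))
    (hwf : SG0.WellFormed) (hfin : SG0.E.Finite)
    (hts : ∀ p ∈ L, t0 ≤ p.2 ∧ p.2 ≤ tcur)
    (hmono : L.Pairwise fun p q => p.2 ≤ q.2)
    (hval : validSeq SG0 (L.map Prod.fst))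
    (v : α) (tk tl : τ) (h0k : t0 ≤ tk) (hkl : tk ≤ tl) (hlc : tl ≤ tcur) :
    ((snapshot SG0 L tl).deg v : ℤ) - ((snapshot SG0 L tk).deg v : ℤ) =
      (L.countP fun p => decide (tk < p.2 ∧ p.2 ≤ tl) && isAddEdgeInc v p.1 : ℤ) -
      (L.countP fun p => decide (tk < p.2 ∧ p.2 ≤ tl) && isRemEdgeInc v p.1 : ℤ) :=
  degree_differential_general SG0 L hfin hmono hval v tk tl hkl
end

section
/- The interval delta is complete in the following sense. Let a timestamped log over [t0, t_cur] starting from a well-formed graph SG_{t0} be given and let t' ∈ [t0, t_cur]. Then: (a) a node v belongs to V(SG_{t'}) if and only if either some logged node operation on v (an addNode(v) or remNode(v)) has timestamp ≤ t' and the last such operation in the log order is addNode(v), or no logged node operation on v has timestamp ≤ t' and v ∈ V(SG_{t0}); (b) an edge {v,w} belongs to E(SG_{t'}) if and only if either some logged edge operation on {v,w} (an addEdge(v,w) or remEdge(v,w)) has timestamp ≤ t' and the last such operation in the log order is addEdge(v,w), or no logged edge operation on {v,w} has timestamp ≤ t' and {v,w} ∈ E(SG_{t0}). -/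
/-- `op` is a node operation on the node `v`, i.e. `addNode v` or `remNode v`. -/
def isNodeOpOn {α : Type*} [DecidableEq α] (v : α) : Op α → Bool
  | Op.addNode w => decide (w = v)
  | Op.remNode w => decide (w = v)
  | _ => false

/-- `op` is an edge operation on the edge `e`, i.e. `addEdge e` or `remEdge e`. -/
def isEdgeOpOn {α : Type*} [DecidableEq α] (e : Sym2 α) : Op α → Bool
  | Op.addEdge f => decide (f = e)
  | Op.remEdge f => decide (f = e)
  | _ => false

/-
The state of a node (resp. edge) is overwritten by every operation on that node (resp. edge)
and left alone by all others, so it is decided by the last such operation, or by the initial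
graph if there is none. The one exception is `remNode w`, which deletes the edges at `w`;
validity makes it harmless, since it requires `w` to be isolated. Because timestamps are
nondecreasing, the operations up to time `t'` form a prefix of the log, hence a valid sequence.
-/

namespace List

variable {β : Type*}

theorem filter_eq_takeWhile_of_pairwise {p : β → Bool} {l : List β}
    (h : l.Pairwise fun a b => p b → p a) : l.filter p = l.takeWhile p := by
  induction l with
  | nil => rfl
  | cons a t ih =>
    rw [pairwise_cons] at h
    by_cases ha : p a
    · simp [ha, ih h.2]
    · have hnil : t.filter p = [] :=
        filter_eq_nil_iff.2 fun b hb hpb => ha (h.1 b hb hpb)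
      simp [ha, hnil]

theorem filter_prefix_of_pairwise {p : β → Bool} {l : List β}
    (h : l.Pairwise fun a b => p b → p a) : l.filter p <+: l :=
  filter_eq_takeWhile_of_pairwise h ▸ takeWhile_prefix p

end List

section LogGraph

variable {α : Type*}

theorem applySeq_concat (G : LogGraph α) (l : List (Op α)) (op : Op α) :
    applySeq G (l ++ [op]) = applyOp (applySeq G l) op :=
  List.foldl_concat _ _ _ _

theorem validSeq.of_prefix {G : LogGraph α} {l₁ l₂ : List (Op α)} (h : l₁ <+: l₂)
    (hl₂ : validSeq G l₂) : validSeq G l₁ := by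
  obtain ⟨l, rfl⟩ := h
  exact (validSeq_append.1 hl₂).1

theorem applySeq_iff_getLast?_filter (P : LogGraph α → Prop) (r : Op α → Bool) (a : Op α)
    (h_sel : ∀ G op, r op → (P (applyOp G op) ↔ op = a))
    (h_other : ∀ G op, validAt G op → r op = false → (P (applyOp G op) ↔ P G))
    (G : LogGraph α) (l : List (Op α)) (hl : validSeq G l) :
    P (applySeq G l) ↔ (l.filter r).getLast? = some a ∨ (l.filter r = [] ∧ P G) := by
  induction l using List.reverseRecOn with
  | nil => simp [applySeq]
  | append_singleton l op ih =>
    obtain ⟨hl, hop, -⟩ := validSeq_append.1 hl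
    rw [applySeq_concat]
    cases hr : r op
    · simp [h_other _ _ hop hr, hr, ih hl]
    · simp [h_sel _ _ hr, hr]

theorem validSeq_map_fst_filter_le {τ : Type*} [LinearOrder τ] {G : LogGraph α}
    {L : List (Op α × τ)} (hmono : L.Pairwise fun p q => p.2 ≤ q.2)
    (hval : validSeq G (L.map Prod.fst)) (t : τ) :
    validSeq G ((L.filter fun p => decide (p.2 ≤ t)).map Prod.fst) := by
  have hprefix : L.filter (fun p => decide (p.2 ≤ t)) <+: L :=
    List.filter_prefix_of_pairwise <| hmono.imp fun hpq hq => by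
      simpa using hpq.trans (by simpa using hq)
  exact hval.of_prefix (hprefix.map Prod.fst)

variable [DecidableEq α]

theorem mem_applySeq_V_iff (v : α) (G : LogGraph α) (l : List (Op α)) (hl : validSeq G l) :
    v ∈ (applySeq G l).V ↔
      (l.filter (isNodeOpOn v)).getLast? = some (Op.addNode v) ∨
        (l.filter (isNodeOpOn v) = [] ∧ v ∈ G.V) := by
  refine applySeq_iff_getLast?_filter (fun G => v ∈ G.V) _ _ ?_ ?_ G l hl
  · rintro G (w | w | f | f) h <;> simp_all [isNodeOpOn, applyOp]
  · rintro G (w | w | f | f) - h <;> simp_all [isNodeOpOn, applyOp, eq_comm]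

theorem mem_applySeq_E_iff (e : Sym2 α) (G : LogGraph α) (l : List (Op α)) (hl : validSeq G l) :
    e ∈ (applySeq G l).E ↔
      (l.filter (isEdgeOpOn e)).getLast? = some (Op.addEdge e) ∨
        (l.filter (isEdgeOpOn e) = [] ∧ e ∈ G.E) := by
  refine applySeq_iff_getLast?_filter (fun G => e ∈ G.E) _ _ ?_ ?_ G l hl
  · rintro G (w | w | f | f) h <;> simp_all [isEdgeOpOn, applyOp]
  · rintro G (w | w | f | f) hop h
    · rfl
    · exact ⟨And.left, fun he => ⟨he, hop.2 e he⟩⟩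
    all_goals simp_all [isEdgeOpOn, applyOp, eq_comm]

end LogGraph

theorem interval_delta_complete_general {α τ : Type*} [DecidableEq α] [LinearOrder τ]
    (SG0 : LogGraph α) (L : List (Op α × τ))
    (hmono : L.Pairwise fun p q => p.2 ≤ q.2)
    (hval : validSeq SG0 (L.map Prod.fst))
    (t' : τ) :
    (∀ v : α,
      v ∈ (snapshot SG0 L t').V ↔
        (((L.filter fun p => decide (p.2 ≤ t')).map Prod.fst).filter
            (isNodeOpOn v)).getLast? = some (Op.addNode v) ∨
        ((((L.filter fun p => decide (p.2 ≤ t')).map Prod.fst).filter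
            (isNodeOpOn v)) = [] ∧ v ∈ SG0.V)) ∧
    (∀ e : Sym2 α, ¬ e.IsDiag →
      (e ∈ (snapshot SG0 L t').E ↔
        (((L.filter fun p => decide (p.2 ≤ t')).map Prod.fst).filter
            (isEdgeOpOn e)).getLast? = some (Op.addEdge e) ∨
        ((((L.filter fun p => decide (p.2 ≤ t')).map Prod.fst).filter
            (isEdgeOpOn e)) = [] ∧ e ∈ SG0.E))) := by
  have hvalid := validSeq_map_fst_filter_le hmono hval t'
  exact ⟨fun v => mem_applySeq_V_iff v SG0 _ hvalid,
    fun e _ => mem_applySeq_E_iff e SG0 _ hvalid⟩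

/-- Completeness of the interval delta: for every `t'` in `[t0, tcur]`,
(a) a node `v` belongs to the snapshot at `t'` iff the last logged node operation on `v`
with timestamp `≤ t'` is `addNode v`, or there is no such operation and `v` is a node of
the initial graph; (b) an edge `e` belongs to the snapshot at `t'` iff the last logged
edge operation on `e` with timestamp `≤ t'` is `addEdge e`, or there is no such operation
and `e` is an edge of the initial graph. -/
theorem interval_delta_complete {α τ : Type*} [DecidableEq α] [LinearOrder τ]
    (t0 tcur : τ) (SG0 : LogGraph α) (L : List (Op α × τ))
    (hwf : SG0.WellFormed)
    (hts : ∀ p ∈ L, t0 ≤ p.2 ∧ p.2 ≤ tcur)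
    (hmono : L.Pairwise fun p q => p.2 ≤ q.2)
    (hval : validSeq SG0 (L.map Prod.fst))
    (t' : τ) (ht' : t0 ≤ t' ∧ t' ≤ tcur) :
    (∀ v : α,
      v ∈ (snapshot SG0 L t').V ↔
        (((L.filter fun p => decide (p.2 ≤ t')).map Prod.fst).filter
            (isNodeOpOn v)).getLast? = some (Op.addNode v) ∨
        ((((L.filter fun p => decide (p.2 ≤ t')).map Prod.fst).filter
            (isNodeOpOn v)) = [] ∧ v ∈ SG0.V)) ∧
    (∀ e : Sym2 α, ¬ e.IsDiag →
      (e ∈ (snapshot SG0 L t').E ↔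
        (((L.filter fun p => decide (p.2 ≤ t')).map Prod.fst).filter
            (isEdgeOpOn e)).getLast? = some (Op.addEdge e) ∨
        ((((L.filter fun p => decide (p.2 ≤ t')).map Prod.fst).filter
            (isEdgeOpOn e)) = [] ∧ e ∈ SG0.E))) :=
  interval_delta_complete_general SG0 L hmono hval t'
end
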